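/- arXiv:2302.12747 — 2 statements merged into one kernel-verified Lean document; each statement's English description precedes it below -/
import Mathlib

section
/- Let A be a commutative Noetherian ring that is a ℚ-algebra, let u ∈ A be a unit, let M be a finitely generated A-module, and let Θ, θ₁, …, θₙ be A-linear endomorphisms of M satisfying θᵢ ∘ θⱼ = θⱼ ∘ θᵢ for all i, j and Θ ∘ θᵢ − θᵢ ∘ Θ = −u • θᵢ for all i. Then each θᵢ is a nilpotent endomorphism of M. -/
/-!
Let `t = θᵢ`. The relation says that `L x = u⁻¹ (x Θ - Θ x)` is a derivation of `End M` with
`L t = t`, hence `L (tʲ) = j tʲ`. Since `M` is finite over the Noetherian ring `A`, `t` is a root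
of a monic polynomial `∑ aⱼ tʲ` of degree `m`. Applying `L (L - 1) ⋯ (L - (m - 1))` to this
relation kills every term with `j < m` and leaves `m! tᵐ = 0`, so `tᵐ = 0` because `m!` is
invertible in a `ℚ`-algebra.
-/

open Polynomial Nat

section Commutator

variable {A S : Type*} [CommRing A] [Ring S] [Algebra A S]

theorem pow_mul_sub_mul_pow_of_mul_sub_mul_eq_smul {a t : S} {r : A}
    (h : t * a - a * t = r • t) (k : ℕ) :
    t ^ k * a - a * t ^ k = ((k : A) * r) • t ^ k := by
  induction k with
  | zero => simp
  | succ k ih =>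
    calc t ^ (k + 1) * a - a * t ^ (k + 1)
        = t ^ k * (t * a - a * t) + (t ^ k * a - a * t ^ k) * t := by noncomm_ring
      _ = (((k + 1 : ℕ) : A) * r) • t ^ (k + 1) := by
        rw [h, ih, mul_smul_comm, smul_mul_assoc, ← pow_succ, ← add_smul]
        congr 1
        push_cast
        ring

theorem commutator_smul_pow_of_mul_sub_mul_eq_smul {a t : S} {u : Aˣ}
    (h : t * a - a * t = (u : A) • t) (k : ℕ) :
    ((↑u⁻¹ : A) • (LinearMap.mulRight A a - LinearMap.mulLeft A a)) (t ^ k) = (k : A) • t ^ k := by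
  rw [LinearMap.smul_apply, LinearMap.sub_apply, LinearMap.mulRight_apply,
    LinearMap.mulLeft_apply, pow_mul_sub_mul_pow_of_mul_sub_mul_eq_smul h, smul_smul,
    mul_left_comm, Units.inv_mul, mul_one]

theorem pow_natDegree_eq_zero_of_mul_sub_mul_eq_smul {a t : S} {u : Aˣ} {p : A[X]}
    (hp : p.Monic) (hpt : aeval t p = 0) (hfac : IsUnit (p.natDegree ! : A))
    (h : t * a - a * t = (u : A) • t) :
    t ^ p.natDegree = 0 := by
  set m := p.natDegree
  set L : Module.End A S := (↑u⁻¹ : A) • (LinearMap.mulRight A a - LinearMap.mulLeft A a)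
  have hL (j : ℕ) : aeval L (descPochhammer A m) (t ^ j) = (j.descFactorial m : A) • t ^ j := by
    rw [Module.End.aeval_apply_of_mem_apply_eq_smul
      (commutator_smul_pow_of_mul_sub_mul_eq_smul h j), descPochhammer_eval_eq_descFactorial]
  have hlow : ∀ j ∈ Finset.range m, p.coeff j • (j.descFactorial m : A) • t ^ j = 0 :=
    fun j hj => by
      rw [(Nat.descFactorial_eq_zero_iff_lt).mpr (Finset.mem_range.mp hj)]
      simp
  have hpochhammer : aeval L (descPochhammer A m) (aeval t p) = (m ! : A) • t ^ m := by
    rw [aeval_eq_sum_range (x := t), map_sum, Finset.sum_range_succ]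
    simp only [map_smul, hL]
    rw [Finset.sum_eq_zero hlow, zero_add, hp.coeff_natDegree, one_smul, Nat.descFactorial_self]
  rw [hpt, map_zero] at hpochhammer
  exact hfac.smul_eq_zero.mp hpochhammer.symm

end Commutator

theorem isUnit_natCast_of_algebra_rat {A : Type*} [Ring A] [Algebra ℚ A] {n : ℕ} (hn : n ≠ 0) :
    IsUnit (n : A) := by
  simpa using ((Nat.cast_ne_zero (R := ℚ)).mpr hn).isUnit.map (algebraMap ℚ A)

theorem each_theta_nilpotent_general
    (A : Type*) [CommRing A] [IsNoetherianRing A] [Algebra ℚ A]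
    (u : Aˣ)
    (M : Type*) [AddCommGroup M] [Module A M] [Module.Finite A M]
    (n : ℕ) (Θ : Module.End A M) (θ : Fin n → Module.End A M)
    (hrel : ∀ i, Θ * θ i - θ i * Θ = -((u : A) • θ i)) :
    ∀ i, IsNilpotent (θ i) := by
  intro i
  obtain ⟨p, hp, hpθ⟩ := Algebra.IsIntegral.isIntegral (R := A) (θ i)
  have h : θ i * Θ - Θ * θ i = (u : A) • θ i := by
    rw [← neg_sub, hrel i, neg_neg]
  exact ⟨p.natDegree, pow_natDegree_eq_zero_of_mul_sub_mul_eq_smul hp hpθ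
    (isUnit_natCast_of_algebra_rat (factorial_ne_zero _)) h⟩

/-- Let `A` be a commutative Noetherian ring that is a `ℚ`-algebra,
`u ∈ A` a unit, `M` a finitely generated `A`-module, and `Θ, θ₁, …, θₙ` `A`-linear
endomorphisms of `M` with `θᵢ ∘ θⱼ = θⱼ ∘ θᵢ` and `Θ ∘ θᵢ − θᵢ ∘ Θ = −u • θᵢ`.
Then each `θᵢ` is nilpotent. -/
theorem each_theta_nilpotent
    (A : Type*) [CommRing A] [IsNoetherianRing A] [Algebra ℚ A]
    (u : Aˣ)
    (M : Type*) [AddCommGroup M] [Module A M] [Module.Finite A M]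
    (n : ℕ) (Θ : Module.End A M) (θ : Fin n → Module.End A M)
    (hcomm : ∀ i j, θ i * θ j = θ j * θ i)
    (hrel : ∀ i, Θ * θ i - θ i * Θ = -((u : A) • θ i)) :
    ∀ i, IsNilpotent (θ i) :=
  each_theta_nilpotent_general A u M n Θ θ hrel
end

section
/- Let R be a commutative ring, n a natural number, T = R[X₁, …, Xₙ] the polynomial ring in n variables over R, and N a T-module which, regarded as an R-module via restriction of scalars, is finitely generated and projective. Then N is a perfect T-module: there exists an exact sequence of T-modules 0 → Pₙ → Pₙ₋₁ → ⋯ → P₀ → N → 0 in which every Pᵢ is a finitely generated projective T-module. -/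
/-!
Induction on `n`, writing `R[X₀, …, Xₙ] = S[X]` with `S = R[X₁, …, Xₙ]`. For an `S[X]`-module `N`
the characteristic sequence `0 → S[X] ⊗_S N → S[X] ⊗_S N → N → 0`, with first map
`X ⊗ 1 - 1 ⊗ X`, is exact. Base change along the flat map `S → S[X]` turns a length-`m`
resolution of `N` over `S` into a resolution of `S[X] ⊗_S N`, and the mapping cone of a lift of
`X ⊗ 1 - 1 ⊗ X` to this resolution resolves `N` over `S[X]` with length `m + 1`.
-/

universe u

/-- A finite projective resolution `0 → P n → ⋯ → P 0 → N → 0` of length `n` of a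
module `N` over a commutative ring `T` by finitely generated projective `T`-modules.
It is encoded by an `ℕ`-indexed complex `P` whose terms vanish in degrees `> n`. -/
structure FiniteProjectiveResolution (T : Type u) [CommRing T]
    (N : Type u) [AddCommGroup N] [Module T N] (n : ℕ) where
  /-- the terms of the resolution -/
  P : ℕ → Type u
  [instAddCommGroup : ∀ i, AddCommGroup (P i)]
  [instModule : ∀ i, Module T (P i)]
  /-- every term is a finitely generated `T`-module -/
  finite : ∀ i, Module.Finite T (P i)
  /-- every term is a projective `T`-module -/
  projective : ∀ i, Module.Projective T (P i)
  /-- the terms in degrees `> n` vanish (so the sequence starts with `0 → P n`) -/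
  subsingleton_of_gt : ∀ i, n < i → Subsingleton (P i)
  /-- the differentials -/
  d : ∀ i, P (i + 1) →ₗ[T] P i
  /-- the augmentation `P 0 → N` -/
  aug : P 0 →ₗ[T] N
  /-- exactness at `N` -/
  aug_surjective : Function.Surjective aug
  /-- exactness at `P 0` -/
  exact_aug : LinearMap.ker aug = LinearMap.range (d 0)
  /-- exactness at `P (i+1)` -/
  exact_d : ∀ i, LinearMap.ker (d i) = LinearMap.range (d (i + 1))

open TensorProduct

attribute [instance] FiniteProjectiveResolution.instAddCommGroup
  FiniteProjectiveResolution.instModule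

section Exactness

variable {R : Type*} [Ring R]

theorem Function.Exact.exists_comp_eq_of_projective {P M N K : Type*} [AddCommGroup P]
    [Module R P] [Module.Projective R P] [AddCommGroup M] [Module R M] [AddCommGroup N]
    [Module R N] [AddCommGroup K] [Module R K] {f : M →ₗ[R] N} {g : N →ₗ[R] K}
    (hfg : Function.Exact f g) (h : P →ₗ[R] N) (hh : g ∘ₗ h = 0) :
    ∃ l : P →ₗ[R] M, f ∘ₗ l = h := by
  have hrange (p : P) : h p ∈ LinearMap.range f := (hfg (h p)).mp (LinearMap.congr_fun hh p)
  obtain ⟨l, hl⟩ := Module.projective_lifting_property f.rangeRestrict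
    (h.codRestrict _ hrange) f.surjective_rangeRestrict
  exact ⟨l, LinearMap.ext fun p => congr_arg Subtype.val (LinearMap.congr_fun hl p)⟩

variable {B₂ B₁ B₀ A₁ A₀ A C : Type*} [AddCommGroup B₂] [Module R B₂] [AddCommGroup B₁]
  [Module R B₁] [AddCommGroup B₀] [Module R B₀] [AddCommGroup A₁] [Module R A₁]
  [AddCommGroup A₀] [Module R A₀] [AddCommGroup A] [Module R A] [AddCommGroup C] [Module R C]

def coneDiff (dB : B₁ →ₗ[R] B₀) (φ : A₀ →ₗ[R] B₀) (dA : A₀ →ₗ[R] A) :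
    B₁ × A₀ →ₗ[R] B₀ × A :=
  (dB.coprod φ).prod (-(dA ∘ₗ LinearMap.snd R B₁ A₀))

@[simp]
theorem coneDiff_apply (dB : B₁ →ₗ[R] B₀) (φ : A₀ →ₗ[R] B₀) (dA : A₀ →ₗ[R] A) (b : B₁)
    (a : A₀) : coneDiff dB φ dA (b, a) = (dB b + φ a, -dA a) :=
  rfl

theorem exact_coneDiff {dB₁ : B₂ →ₗ[R] B₁} {dB₀ : B₁ →ₗ[R] B₀} {dA₁ : A₁ →ₗ[R] A₀}
    {dA₀ : A₀ →ₗ[R] A} {φ₁ : A₁ →ₗ[R] B₁} {φ₀ : A₀ →ₗ[R] B₀}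
    (hB : Function.Exact dB₁ dB₀) (hA : Function.Exact dA₁ dA₀)
    (hφ : dB₀ ∘ₗ φ₁ = φ₀ ∘ₗ dA₁) (D : B₁ × A₀ →ₗ[R] C)
    (hD : ∀ b a, D (b, a) = 0 ↔ dB₀ b + φ₀ a = 0 ∧ dA₀ a = 0) :
    Function.Exact (coneDiff dB₁ φ₁ dA₁) D := by
  rintro ⟨b, a⟩
  rw [hD]
  constructor
  · rintro ⟨hb, ha⟩
    obtain ⟨a', rfl⟩ := (hA a).mp ha
    have hb' : dB₀ (b + φ₁ a') = 0 := by
      rwa [map_add, ← LinearMap.comp_apply dB₀, hφ, LinearMap.comp_apply]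
    obtain ⟨b', hb'⟩ := (hB _).mp hb'
    refine ⟨(b', -a'), ?_⟩
    simp [hb']
  · rintro ⟨⟨b', a'⟩, h⟩
    simp only [coneDiff_apply, Prod.mk.injEq] at h
    obtain ⟨rfl, rfl⟩ := h
    have hφa' := LinearMap.congr_fun hφ a'
    simp only [LinearMap.comp_apply] at hφa'
    simp [hB.apply_apply_eq_zero, hA.apply_apply_eq_zero, hφa']

theorem exact_coprod_comp {dB : B₁ →ₗ[R] B₀} {augB : B₀ →ₗ[R] B₂} {φ : A₀ →ₗ[R] B₀}
    {augA : A₀ →ₗ[R] A} {f : A →ₗ[R] B₂} {g : B₂ →ₗ[R] C}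
    (hB : Function.Exact dB augB) (hA : Function.Surjective augA)
    (hfg : Function.Exact f g) (hφ : augB ∘ₗ φ = f ∘ₗ augA) :
    Function.Exact (dB.coprod φ) (g ∘ₗ augB) := by
  have hφa (a : A₀) : augB (φ a) = f (augA a) := LinearMap.congr_fun hφ a
  intro x
  constructor
  · intro hx
    obtain ⟨a, ha⟩ := (hfg _).mp hx
    obtain ⟨a₀, rfl⟩ := hA a
    obtain ⟨b, hb⟩ := (hB (x - φ a₀)).mp (by rw [map_sub, hφa, ha, sub_self])
    exact ⟨(b, a₀), by simp [hb]⟩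
  · rintro ⟨⟨b, a⟩, rfl⟩
    simp [hB.apply_apply_eq_zero, hφa, hfg.apply_apply_eq_zero]

end Exactness

theorem Finsupp.eq_zero_of_forall_apply_eq_apply_succ {M : Type*} [Zero M] {c : ℕ →₀ M}
    {F : M → M} (hF : F 0 = 0) (h : ∀ i, c i = F (c (i + 1))) : c = 0 := by
  by_contra hc
  have hsupp : c.support.Nonempty := Finsupp.support_nonempty_iff.mpr hc
  have htop : c (c.support.max' hsupp) ≠ 0 := Finsupp.mem_support_iff.mp (c.support.max'_mem hsupp)
  have habove : c (c.support.max' hsupp + 1) = 0 :=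
    Finsupp.notMem_support_iff.mp fun hmem => by
      have := c.support.le_max' _ hmem
      omega
  exact htop (by rw [h, habove, hF])

namespace FiniteProjectiveResolution

section Basic

variable {T : Type u} [CommRing T] {N : Type u} [AddCommGroup N] [Module T N] {m : ℕ}

theorem exact_d_aug (res : FiniteProjectiveResolution T N m) :
    Function.Exact (res.d 0) res.aug :=
  LinearMap.exact_iff.mpr res.exact_aug

theorem exact_d_d (res : FiniteProjectiveResolution T N m) (i : ℕ) :
    Function.Exact (res.d (i + 1)) (res.d i) :=
  LinearMap.exact_iff.mpr (res.exact_d i)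

variable (T N) in
noncomputable def ofFiniteProjective [Module.Finite T N] [Module.Projective T N] :
    FiniteProjectiveResolution T N 0 where
  P
    | 0 => N
    | _ + 1 => PUnit.{u + 1}
  instAddCommGroup
    | 0 => inferInstanceAs (AddCommGroup N)
    | _ + 1 => inferInstanceAs (AddCommGroup PUnit.{u + 1})
  instModule
    | 0 => inferInstanceAs (Module T N)
    | _ + 1 => (inferInstance : Module T PUnit.{u + 1})
  finite
    | 0 => inferInstanceAs (Module.Finite T N)
    | _ + 1 => inferInstanceAs (Module.Finite T PUnit.{u + 1})
  projective
    | 0 => inferInstanceAs (Module.Projective T N)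
    | _ + 1 => inferInstanceAs (Module.Projective T PUnit.{u + 1})
  subsingleton_of_gt
    | _ + 1, _ => inferInstanceAs (Subsingleton PUnit.{u + 1})
  d _ := 0
  aug := LinearMap.id
  aug_surjective := Function.surjective_id
  exact_aug := by rw [LinearMap.ker_id, LinearMap.range_zero]
  exact_d _ := Subsingleton.elim _ _

end Basic

section BaseChange

variable {S : Type u} [CommRing S] (T : Type u) [CommRing T] [Algebra S T] [Module.Flat S T]
  {N : Type u} [AddCommGroup N] [Module S N] {m : ℕ}

noncomputable def baseChange (res : FiniteProjectiveResolution S N m) :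
    FiniteProjectiveResolution T (T ⊗[S] N) m where
  P i := T ⊗[S] res.P i
  finite i := have := res.finite i; inferInstance
  projective i := have := res.projective i; inferInstance
  subsingleton_of_gt i hi := have := res.subsingleton_of_gt i hi; inferInstance
  d i := (res.d i).baseChange T
  aug := res.aug.baseChange T
  aug_surjective := LinearMap.lTensor_surjective T res.aug_surjective
  exact_aug := LinearMap.exact_iff.mp (Module.Flat.lTensor_exact T res.exact_d_aug)
  exact_d i := LinearMap.exact_iff.mp (Module.Flat.lTensor_exact T (res.exact_d_d i))

end BaseChange

section Cone

variable {T : Type u} [CommRing T] {A B N : Type u} [AddCommGroup A] [Module T A]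
  [AddCommGroup B] [Module T B] [AddCommGroup N] [Module T N] {m k : ℕ}

theorem exists_chainMap_lift (RA : FiniteProjectiveResolution T A m)
    (RB : FiniteProjectiveResolution T B k) (f : A →ₗ[T] B) :
    ∃ φ : ∀ i, RA.P i →ₗ[T] RB.P i,
      RB.aug ∘ₗ φ 0 = f ∘ₗ RA.aug ∧ ∀ i, RB.d i ∘ₗ φ (i + 1) = φ i ∘ₗ RA.d i := by
  have := RA.projective
  let Square (i : ℕ) := {p : (RA.P i →ₗ[T] RB.P i) × (RA.P (i + 1) →ₗ[T] RB.P (i + 1)) //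
    RB.d i ∘ₗ p.2 = p.1 ∘ₗ RA.d i}
  have hnext (i : ℕ) (p : Square i) : ∃ ψ : RA.P (i + 2) →ₗ[T] RB.P (i + 2),
      RB.d (i + 1) ∘ₗ ψ = p.1.2 ∘ₗ RA.d (i + 1) :=
    (RB.exact_d_d i).exists_comp_eq_of_projective (p.1.2 ∘ₗ RA.d (i + 1)) <| by
      rw [← LinearMap.comp_assoc, p.2, LinearMap.comp_assoc,
        (RA.exact_d_d i).linearMap_comp_eq_zero, LinearMap.comp_zero]
  choose next hnext using hnext
  obtain ⟨φ₀, hφ₀⟩ := Module.projective_lifting_property RB.aug (f ∘ₗ RA.aug) RB.aug_surjective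
  obtain ⟨φ₁, hφ₁⟩ := RB.exact_d_aug.exists_comp_eq_of_projective (φ₀ ∘ₗ RA.d 0) <| by
    rw [← LinearMap.comp_assoc, hφ₀, LinearMap.comp_assoc,
      RA.exact_d_aug.linearMap_comp_eq_zero, LinearMap.comp_zero]
  let square (i : ℕ) : Square i :=
    Nat.rec ⟨(φ₀, φ₁), hφ₁⟩ (fun i p => ⟨(p.1.2, next i p), hnext i p⟩) i
  exact ⟨fun i => (square i).1.1, hφ₀, fun i => (square i).2⟩

noncomputable def cone (RA : FiniteProjectiveResolution T A m)
    (RB : FiniteProjectiveResolution T B m) {f : A →ₗ[T] B} {g : B →ₗ[T] N}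
    (hf : Function.Injective f) (hfg : Function.Exact f g) (hg : Function.Surjective g)
    (φ : ∀ i, RA.P i →ₗ[T] RB.P i) (hφ₀ : RB.aug ∘ₗ φ 0 = f ∘ₗ RA.aug)
    (hφ : ∀ i, RB.d i ∘ₗ φ (i + 1) = φ i ∘ₗ RA.d i) :
    FiniteProjectiveResolution T N (m + 1) where
  P
    | 0 => RB.P 0
    | i + 1 => RB.P (i + 1) × RA.P i
  instAddCommGroup
    | 0 => inferInstanceAs (AddCommGroup (RB.P 0))
    | i + 1 => inferInstanceAs (AddCommGroup (RB.P (i + 1) × RA.P i))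
  instModule
    | 0 => inferInstanceAs (Module T (RB.P 0))
    | i + 1 => inferInstanceAs (Module T (RB.P (i + 1) × RA.P i))
  finite
    | 0 => RB.finite 0
    | i + 1 => have := RB.finite (i + 1); have := RA.finite i;
        inferInstanceAs (Module.Finite T (RB.P (i + 1) × RA.P i))
  projective
    | 0 => RB.projective 0
    | i + 1 => have := RB.projective (i + 1); have := RA.projective i;
        inferInstanceAs (Module.Projective T (RB.P (i + 1) × RA.P i))
  subsingleton_of_gt
    | i + 1, hi => have := RB.subsingleton_of_gt (i + 1) (by omega);
        have := RA.subsingleton_of_gt i (by omega);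
        inferInstanceAs (Subsingleton (RB.P (i + 1) × RA.P i))
  d
    | 0 => (RB.d 0).coprod (φ 0)
    | i + 1 => coneDiff (RB.d (i + 1)) (φ (i + 1)) (RA.d i)
  aug := g ∘ₗ RB.aug
  aug_surjective := hg.comp RB.aug_surjective
  exact_aug := LinearMap.exact_iff.mp <|
    exact_coprod_comp RB.exact_d_aug RA.aug_surjective hfg hφ₀
  exact_d
    | 0 => LinearMap.exact_iff.mp <| exact_coneDiff (RB.exact_d_d 0) RA.exact_d_aug (hφ 0) _
        fun b a => by
          refine ⟨fun h => ⟨h, hf ?_⟩, And.left⟩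
          have hfa : RB.aug (RB.d 0 b + φ 0 a) = f (RA.aug a) := by
            rw [map_add, RB.exact_d_aug.apply_apply_eq_zero, zero_add]
            exact LinearMap.congr_fun hφ₀ a
          rw [← hfa, map_zero]
          exact congr_arg RB.aug h |>.trans (map_zero _)
    | i + 1 => LinearMap.exact_iff.mp <|
        exact_coneDiff (RB.exact_d_d (i + 1)) (RA.exact_d_d i) (hφ (i + 1)) _
          fun b a => by simp [Prod.ext_iff]

theorem nonempty_succ_of_exact (RA : FiniteProjectiveResolution T A m)
    (RB : FiniteProjectiveResolution T B m) {f : A →ₗ[T] B} {g : B →ₗ[T] N}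
    (hf : Function.Injective f) (hfg : Function.Exact f g) (hg : Function.Surjective g) :
    Nonempty (FiniteProjectiveResolution T N (m + 1)) :=
  let ⟨φ, hφ₀, hφ⟩ := exists_chainMap_lift RA RB f
  ⟨cone RA RB hf hfg hg φ hφ₀ hφ⟩

end Cone

end FiniteProjectiveResolution

section Coefficients

open Polynomial

variable {S T : Type*} [CommRing S] [CommRing T] [Algebra S T] (e : S[X] ≃ₐ[S] T)
  {N N' : Type*} [AddCommGroup N] [Module S N] [AddCommGroup N'] [Module S N']

/-- Coefficients under the identification `T ⊗[S] N ≃ S[X] ⊗[S] N ≃ N[X]`. -/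
noncomputable def coeffTensor : T ⊗[S] N ≃ₗ[S] (ℕ →₀ N) :=
  (TensorProduct.congr (e.symm.toLinearEquiv.trans (basisMonomials S).repr)
    (LinearEquiv.refl S N)).trans (finsuppScalarLeft S N ℕ)

theorem coeffTensor_tmul (t : T) (v : N) (i : ℕ) :
    coeffTensor e (t ⊗ₜ v) i = (e.symm t).coeff i • v := by
  simp only [coeffTensor, LinearEquiv.trans_apply, congr_tmul, LinearEquiv.refl_apply,
    finsuppScalarLeft_apply_tmul_apply]
  rfl

theorem coeffTensor_X_smul (u : T ⊗[S] N) (i : ℕ) :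
    coeffTensor e (e X • u) (i + 1) = coeffTensor e u i := by
  induction u with
  | zero => simp
  | tmul t v =>
    rw [smul_tmul', smul_eq_mul, coeffTensor_tmul, coeffTensor_tmul, map_mul, e.symm_apply_apply,
      coeff_X_mul]
  | add u u' hu hu' => simp only [smul_add, map_add, Finsupp.add_apply, hu, hu']

theorem coeffTensor_baseChange (f : N →ₗ[S] N') (u : T ⊗[S] N) (i : ℕ) :
    coeffTensor e (f.baseChange T u) i = f (coeffTensor e u i) := by
  induction u with
  | zero => simp
  | tmul t v => rw [LinearMap.baseChange_tmul, coeffTensor_tmul, coeffTensor_tmul, map_smul]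
  | add u u' hu hu' => simp only [map_add, Finsupp.add_apply, hu, hu']

end Coefficients

section CharacteristicSequence

open Polynomial

variable {S T N : Type*} [CommRing S] [CommRing T] [Algebra S T] [AddCommGroup N] [Module T N]
  [Module S N] [IsScalarTower S T N]

variable (S T N) in
noncomputable def actionMap : T ⊗[S] N →ₗ[T] N :=
  LinearMap.liftBaseChange T LinearMap.id

@[simp]
theorem actionMap_tmul (t : T) (v : N) : actionMap S T N (t ⊗ₜ v) = t • v := by
  simp [actionMap]

theorem actionMap_surjective : Function.Surjective (actionMap S T N) :=
  fun v => ⟨1 ⊗ₜ v, by simp⟩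

variable (S N) in
/-- The map `x ⊗ 1 - 1 ⊗ x` of `T ⊗[S] N`. -/
noncomputable def charMap (x : T) : T ⊗[S] N →ₗ[T] T ⊗[S] N :=
  x • LinearMap.id - ((LinearMap.lsmul T N x).restrictScalars S).baseChange T

theorem charMap_tmul (x t : T) (v : N) :
    charMap S N x (t ⊗ₜ v) = (x * t) ⊗ₜ v - t ⊗ₜ (x • v) := by
  simp [charMap, smul_tmul']

theorem actionMap_charMap (x : T) (u : T ⊗[S] N) : actionMap S T N (charMap S N x u) = 0 := by
  induction u with
  | zero => simp
  | tmul t v => simp [charMap_tmul, mul_smul, smul_comm x t v]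
  | add u u' hu hu' => simp only [map_add, hu, hu', add_zero]

theorem tmul_sub_one_tmul_smul_mem_range_charMap (e : S[X] ≃ₐ[S] T) (t : T) (v : N) :
    t ⊗ₜ[S] v - 1 ⊗ₜ (t • v) ∈ LinearMap.range (charMap S N (e X)) := by
  obtain ⟨p, rfl⟩ := e.surjective t
  induction p using Polynomial.induction_on generalizing v with
  | C a =>
    rw [← Polynomial.algebraMap_eq, e.commutes, Algebra.algebraMap_eq_smul_one, smul_tmul,
      smul_assoc, one_smul, sub_self]
    exact zero_mem _
  | add p q hp hq =>
    rw [map_add, add_tmul, add_smul, tmul_add, add_sub_add_comm]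
    exact add_mem (hp v) (hq v)
  | monomial n a h =>
    -- `y x ⊗ v - 1 ⊗ y x v = (x ⊗ 1 - 1 ⊗ x) (y ⊗ v) + (y ⊗ x v - 1 ⊗ y (x v))`
    have key := add_mem (LinearMap.mem_range_self (charMap S N (e X)) (e (C a * X ^ n) ⊗ₜ v))
      (h (e X • v))
    rw [charMap_tmul, ← mul_smul, mul_comm (e X), ← map_mul] at key
    rw [pow_succ, ← mul_assoc]
    convert key using 1
    abel

theorem sub_one_tmul_actionMap_mem_range_charMap (e : S[X] ≃ₐ[S] T) (u : T ⊗[S] N) :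
    u - 1 ⊗ₜ actionMap S T N u ∈ LinearMap.range (charMap S N (e X)) := by
  induction u with
  | zero => simp
  | tmul t v => simpa using tmul_sub_one_tmul_smul_mem_range_charMap e t v
  | add u u' hu hu' =>
    rw [map_add, tmul_add, add_sub_add_comm]
    exact add_mem hu hu'

theorem exact_charMap_actionMap (e : S[X] ≃ₐ[S] T) :
    Function.Exact (charMap S N (e X)) (actionMap S T N) := by
  intro u
  refine ⟨fun hu => ?_, ?_⟩
  · simpa [hu] using sub_one_tmul_actionMap_mem_range_charMap e u
  · rintro ⟨w, rfl⟩
    exact actionMap_charMap _ w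

theorem charMap_injective (e : S[X] ≃ₐ[S] T) : Function.Injective (charMap S N (e X)) := by
  refine (injective_iff_map_eq_zero _).mpr fun u hu => ?_
  set x := e X
  have hxu : x • u = ((LinearMap.lsmul T N x).restrictScalars S).baseChange T u := by
    simpa [charMap, sub_eq_zero] using hu
  -- the coefficients of `u` satisfy `cᵢ = x cᵢ₊₁`, so the top one vanishes
  have hcoeff : coeffTensor e u = 0 := by
    refine Finsupp.eq_zero_of_forall_apply_eq_apply_succ (smul_zero x) fun i => ?_
    rw [← coeffTensor_X_smul e u i, hxu, coeffTensor_baseChange]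
    rfl
  simpa using congr_arg (coeffTensor e).symm hcoeff

end CharacteristicSequence

theorem FiniteProjectiveResolution.nonempty_succ_of_polynomial {S T : Type u} [CommRing S]
    [CommRing T] [Algebra S T] (e : Polynomial S ≃ₐ[S] T) {N : Type u} [AddCommGroup N]
    [Module T N] [Module S N] [IsScalarTower S T N] {m : ℕ}
    (res : FiniteProjectiveResolution S N m) :
    Nonempty (FiniteProjectiveResolution T N (m + 1)) :=
  have : Module.Free S T := .of_basis ((Polynomial.basisMonomials S).map e.toLinearEquiv)
  nonempty_succ_of_exact (res.baseChange T) (res.baseChange T) (charMap_injective e)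
    (exact_charMap_actionMap e) actionMap_surjective

/-- Let `R` be a commutative ring, `T = R[X₁, …, Xₙ]`, and `N` a
`T`-module which is finitely generated and projective as an `R`-module (via
restriction of scalars).  Then `N` is a perfect `T`-module: it admits a resolution
`0 → Pₙ → ⋯ → P₀ → N → 0` by finitely generated projective `T`-modules. -/
theorem perfect_over_polynomial_ring_of_finite_projective_over_base
    (R : Type u) [CommRing R] (n : ℕ)
    (N : Type u) [AddCommGroup N] [Module R N]
    [Module (MvPolynomial (Fin n) R) N]
    [IsScalarTower R (MvPolynomial (Fin n) R) N]
    [Module.Finite R N] [Module.Projective R N] :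
    Nonempty (FiniteProjectiveResolution (MvPolynomial (Fin n) R) N n) := by
  induction n generalizing N with
  | zero =>
    have : Algebra.FormallyUnramified R (MvPolynomial (Fin 0) R) :=
      .of_surjective (Algebra.ofId R _) (MvPolynomial.C_surjective _)
    have := Algebra.FormallyUnramified.projective_of_restrictScalars R (MvPolynomial (Fin 0) R) N
    have := Module.Finite.of_restrictScalars_finite R (MvPolynomial (Fin 0) R) N
    exact ⟨.ofFiniteProjective _ N⟩
  | succ n ih =>
    -- view `R[X₀, …, Xₙ]` as `R[X₁, …, Xₙ][X₀]`
    let e := (MvPolynomial.finSuccEquiv R n).symm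
    let _ := (e.toAlgHom.comp Polynomial.CAlgHom).toRingHom.toAlgebra
    let _ : Module (MvPolynomial (Fin n) R) N :=
      Module.compHom N (algebraMap (MvPolynomial (Fin n) R) (MvPolynomial (Fin (n + 1)) R))
    have : IsScalarTower (MvPolynomial (Fin n) R) (MvPolynomial (Fin (n + 1)) R) N :=
      .of_algebraMap_smul fun _ _ => rfl
    have := IsScalarTower.to₁₂₄ R (MvPolynomial (Fin n) R) (MvPolynomial (Fin (n + 1)) R) N
    obtain ⟨res⟩ := ih N
    exact res.nonempty_succ_of_polynomial (AlgEquiv.ofRingEquiv (f := e.toRingEquiv) fun _ => rfl)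
end
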